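/- Fix p, q, k. For α in Fin p and β in Fin q, let P_{αβ} : ℂ^{p×k} × ℂ^{q×k} → ℂ be P_{αβ}(Z,W) = Σ_{t} Z_{α,t} W_{β,t}. If k ≥ 1 and pq ≤ k, then the pq polynomials P_{αβ} are algebraically independent over ℂ. -/
import Mathlib


open MvPolynomial

/-- `P_{αβ} = Σ_t Z_{α,t} W_{β,t}` as a polynomial in the `pk + qk` variables
`Z_{α,t}` (`Sum.inl`) and `W_{β,t}` (`Sum.inr`). -/
noncomputable def pairingPoly (p q k : ℕ) (ab : Fin p × Fin q) :
    MvPolynomial ((Fin p × Fin k) ⊕ (Fin q × Fin k)) ℂ :=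
  ∑ t : Fin k, X (Sum.inl (ab.1, t)) * X (Sum.inr (ab.2, t))

/-- If `1 ≤ k` and `pq ≤ k`, then the `pq` invariants `P_{αβ}` are algebraically
independent over `ℂ`. -/
theorem stmt_6 (p q k : ℕ) (hk : 1 ≤ k) (hpq : p * q ≤ k) :
    AlgebraicIndependent ℂ (pairingPoly p q k) := by
  classical
  -- an injection of index pairs into `Fin k`
  let e : Fin p × Fin q ↪ Fin k :=
    ⟨fun ab => Fin.castLE hpq (finProdFinEquiv ab),
     fun a b hab => finProdFinEquiv.injective (Fin.castLE_injective hpq hab)⟩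
  -- specialization of variables
  let f : (Fin p × Fin k) ⊕ (Fin q × Fin k) → MvPolynomial (Fin p × Fin q) ℂ :=
    fun v => match v with
      | Sum.inl (α, t) => if h : ∃ β, e (α, β) = t then X (α, h.choose) else 0
      | Sum.inr (β, t) => if ∃ α', e (α', β) = t then 1 else 0
  have key : ∀ ab, aeval f (pairingPoly p q k ab) = X ab := by
    rintro ⟨α, β⟩
    rw [pairingPoly, map_sum]
    rw [Finset.sum_eq_single (e (α, β))]
    · simp only [map_mul, aeval_X, f]
      have h1 : ∃ β', e (α, β') = e (α, β) := ⟨β, rfl⟩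
      have h2 : ∃ α', e (α', β) = e (α, β) := ⟨α, rfl⟩
      rw [dif_pos h1, if_pos h2, mul_one]
      have := h1.choose_spec
      have hβ : h1.choose = β := by
        have := e.injective this
        exact (Prod.mk.injEq _ _ _ _ ▸ this).2
      rw [hβ]
    · intro t _ ht
      simp only [map_mul, aeval_X, f]
      by_cases h1 : ∃ β', e (α, β') = t
      · by_cases h2 : ∃ α', e (α', β) = t
        · exfalso
          obtain ⟨β', hβ'⟩ := h1
          obtain ⟨α', hα'⟩ := h2
          have : (α, β') = (α', β) := e.injective (hβ'.trans hα'.symm)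
          obtain ⟨h3, h4⟩ := Prod.mk.injEq _ _ _ _ ▸ this
          exact ht (by rw [← hβ', h4])
        · rw [if_neg h2, mul_zero]
      · rw [dif_neg h1, zero_mul]
    · intro h
      exact absurd (Finset.mem_univ _) h
  have : AlgebraicIndependent ℂ ((aeval f : _ →ₐ[ℂ] _) ∘ pairingPoly p q k) := by
    have : (aeval f : _ →ₐ[ℂ] _) ∘ pairingPoly p q k = X := funext key
    rw [this]
    exact algebraicIndependent_X _ _
  exact this.of_comp (aeval f)
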